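/- arXiv:2002.11908 — 2 statements merged into one kernel-verified Lean document; each statement's English description precedes it below -/
import Mathlib

section
/- Fix μ > 0, c > 0 and b ∈ ℕ, and define G : [0,∞) → ℝ by G(λ) = (Σ_{n=0}^{b+1} (λ/μ)^n/(n!)^c) / (Σ_{n=0}^∞ (λ/μ)^n/(n!)^c). Then G is nonincreasing: for all 0 ≤ λ₁ ≤ λ₂ one has G(λ₂) ≤ G(λ₁), and G(0) = 1. -/
/-!
Write `G λ = R (λ / μ)` with `R x = (∑_{n<N} aₙ xⁿ) / ∑ aₙ xⁿ` and `aₙ = (n!)^{-c}`.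
For `0 ≤ x ≤ y`, splitting each full sum into the partial sum plus its tail, `R y ≤ R x` reduces
to `(∑_{k<N} a_k y^k) (∑_{m≥N} a_m x^m) ≤ (∑_{k<N} a_k x^k) (∑_{m≥N} a_m y^m)`, which holds term
by term because `y^k x^m ≤ x^k y^m` whenever `k ≤ m`.
-/

open Finset

lemma pow_mul_pow_le_pow_mul_pow {x y : ℝ} (hx : 0 ≤ x) (hxy : x ≤ y) {k m : ℕ} (hkm : k ≤ m) :
    y ^ k * x ^ m ≤ x ^ k * y ^ m := by
  obtain ⟨d, rfl⟩ := Nat.exists_eq_add_of_le hkm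
  calc y ^ k * x ^ (k + d) = (x * y) ^ k * x ^ d := by ring
    _ ≤ (x * y) ^ k * y ^ d :=
      mul_le_mul_of_nonneg_left (pow_le_pow_left₀ hx hxy d)
        (pow_nonneg (mul_nonneg hx (hx.trans hxy)) k)
    _ = x ^ k * y ^ (k + d) := by ring

noncomputable def partialSumRatio (a : ℕ → ℝ) (N : ℕ) (x : ℝ) : ℝ :=
  (∑ n ∈ range N, a n * x ^ n) / ∑' n, a n * x ^ n

section NonnegCoeffs

variable {a : ℕ → ℝ} (ha : ∀ n, 0 ≤ a n)
include ha

lemma summable_mul_pow_of_le {x y : ℝ} (hx : 0 ≤ x) (hxy : x ≤ y)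
    (hy : Summable fun n ↦ a n * y ^ n) : Summable fun n ↦ a n * x ^ n :=
  hy.of_nonneg_of_le (fun n ↦ by have := ha n; positivity)
    fun n ↦ by have := ha n; gcongr

lemma sum_mul_tsum_tail_le (N : ℕ) {x y : ℝ} (hx : 0 ≤ x) (hxy : x ≤ y)
    (hy : Summable fun n ↦ a n * y ^ n) :
    (∑ k ∈ range N, a k * y ^ k) * ∑' m, a (m + N) * x ^ (m + N) ≤
      (∑ k ∈ range N, a k * x ^ k) * ∑' m, a (m + N) * y ^ (m + N) := by
  have tail_summable {z : ℝ} (hz : Summable fun n ↦ a n * z ^ n) :=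
    (summable_nat_add_iff N).mpr hz
  rw [← tsum_mul_left, ← tsum_mul_left]
  refine Summable.tsum_le_tsum (fun m ↦ ?_)
    ((tail_summable (summable_mul_pow_of_le ha hx hxy hy)).mul_left _)
    ((tail_summable hy).mul_left _)
  rw [sum_mul, sum_mul]
  refine sum_le_sum fun k hk ↦ ?_
  have hkm : k ≤ m + N := by have := mem_range.mp hk; omega
  calc a k * y ^ k * (a (m + N) * x ^ (m + N))
      = a k * a (m + N) * (y ^ k * x ^ (m + N)) := by ring
    _ ≤ a k * a (m + N) * (x ^ k * y ^ (m + N)) :=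
      mul_le_mul_of_nonneg_left (pow_mul_pow_le_pow_mul_pow hx hxy hkm)
        (mul_nonneg (ha k) (ha _))
    _ = a k * x ^ k * (a (m + N) * y ^ (m + N)) := by ring

lemma partialSumRatio_nonneg (N : ℕ) {x : ℝ} (hx : 0 ≤ x) : 0 ≤ partialSumRatio a N x :=
  div_nonneg (sum_nonneg fun n _ ↦ by have := ha n; positivity)
    (tsum_nonneg fun n ↦ by have := ha n; positivity)

lemma antitoneOn_partialSumRatio (ha₀ : 0 < a 0) (N : ℕ) :
    AntitoneOn (partialSumRatio a N) (Set.Ici 0) := by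
  intro x (hx : 0 ≤ x) y _ hxy
  by_cases hy : Summable fun n ↦ a n * y ^ n
  · have hx' := summable_mul_pow_of_le ha hx hxy hy
    have tsum_pos {z : ℝ} (hz₀ : 0 ≤ z) (hz : Summable fun n ↦ a n * z ^ n) :
        0 < ∑' n, a n * z ^ n :=
      hz.tsum_pos (fun n ↦ by have := ha n; positivity) 0 (by simpa using ha₀)
    unfold partialSumRatio
    rw [div_le_div_iff₀ (tsum_pos (hx.trans hxy) hy) (tsum_pos hx hx'),
      ← hx'.sum_add_tsum_nat_add N, ← hy.sum_add_tsum_nat_add N, mul_add, mul_add, mul_comm]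
    exact add_le_add_right (sum_mul_tsum_tail_le ha N hx hxy hy) _
  · -- a divergent series has `tsum` equal to `0`, so the ratio at `y` is `0`
    rw [partialSumRatio, tsum_eq_zero_of_not_summable hy, div_zero]
    exact partialSumRatio_nonneg ha N hx

end NonnegCoeffs

lemma partialSumRatio_zero {a : ℕ → ℝ} (ha₀ : a 0 ≠ 0) {N : ℕ} (hN : 0 < N) :
    partialSumRatio a N 0 = 1 := by
  have zero_pow_term (n : ℕ) (hn : n ≠ 0) : a n * (0 : ℝ) ^ n = 0 := by simp [hn]
  rw [partialSumRatio, sum_eq_single_of_mem 0 (mem_range.mpr hN) fun n _ ↦ zero_pow_term n,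
    tsum_eq_single 0 zero_pow_term, div_self (by simpa using ha₀)]

theorem G_antitone_on_nonneg_general (mu c : ℝ) (hmu : 0 < mu) (b : ℕ)
    (G : ℝ → ℝ)
    (hG : ∀ lam : ℝ, G lam =
      (∑ n ∈ Finset.range (b + 2), (lam / mu) ^ n / ((n.factorial : ℝ)) ^ c) /
        (∑' n : ℕ, (lam / mu) ^ n / ((n.factorial : ℝ)) ^ c)) :
    (∀ lam₁ lam₂ : ℝ, 0 ≤ lam₁ → lam₁ ≤ lam₂ → G lam₂ ≤ G lam₁) ∧ G 0 = 1 := by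
  set a : ℕ → ℝ := fun n ↦ ((n.factorial : ℝ) ^ c)⁻¹
  have hG_eq (lam : ℝ) : G lam = partialSumRatio a (b + 2) (lam / mu) := by
    simp only [hG, partialSumRatio, a, div_eq_inv_mul]
  have ha (n : ℕ) : 0 ≤ a n := by positivity
  have ha₀ : a 0 = 1 := by simp [a]
  refine ⟨fun lam₁ lam₂ h₁ h₁₂ ↦ ?_, ?_⟩
  · rw [hG_eq, hG_eq]
    exact antitoneOn_partialSumRatio ha (by rw [ha₀]; exact one_pos) (b + 2)
      (div_nonneg h₁ hmu.le) (div_nonneg (h₁.trans h₁₂) hmu.le)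
      (div_le_div_of_nonneg_right h₁₂ hmu.le)
  · rw [hG_eq, zero_div]
    exact partialSumRatio_zero (by rw [ha₀]; exact one_ne_zero) (by omega)

/-- Fix `μ > 0`, `c > 0`, `b ∈ ℕ` and define
`G(λ) = (∑_{n=0}^{b+1} (λ/μ)^n/(n!)^c) / (∑_{n=0}^∞ (λ/μ)^n/(n!)^c)`.
Then `G` is nonincreasing on `[0, ∞)` and `G 0 = 1`. -/
theorem G_antitone_on_nonneg (mu c : ℝ) (hmu : 0 < mu) (hc : 0 < c) (b : ℕ)
    (G : ℝ → ℝ)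
    (hG : ∀ lam : ℝ, G lam =
      (∑ n ∈ Finset.range (b + 2), (lam / mu) ^ n / ((n.factorial : ℝ)) ^ c) /
        (∑' n : ℕ, (lam / mu) ^ n / ((n.factorial : ℝ)) ^ c)) :
    (∀ lam₁ lam₂ : ℝ, 0 ≤ lam₁ → lam₁ ≤ lam₂ → G lam₂ ≤ G lam₁) ∧ G 0 = 1 :=
  G_antitone_on_nonneg_general mu c hmu b G hG
end

section
/- Fix μ > 0, c > 0, b ∈ ℕ and θ ∈ ℝ, and define G : [0,∞) → ℝ by G(λ) = (Σ_{n=0}^{b+1} (λ/μ)^n/(n!)^c) / (Σ_{n=0}^∞ (λ/μ)^n/(n!)^c). Then the feasible set {λ ≥ 0 : G(λ) ≥ 1 − θ} is downward closed: if 0 ≤ λ₁ ≤ λ₂ and G(λ₂) ≥ 1 − θ, then G(λ₁) ≥ 1 − θ. Consequently, if this set is nonempty and bounded above with supremum λ_max attained, the constraint G(λ) ≥ 1 − θ is equivalent to λ ≤ λ_max. -/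
private lemma myterm_nonneg (c x : ℝ) (hx : 0 ≤ x) (n : ℕ) :
    0 ≤ x ^ n / ((n.factorial : ℝ)) ^ c :=
  div_nonneg (pow_nonneg hx n) (Real.rpow_nonneg (Nat.cast_nonneg _) c)

private lemma mysumm (c : ℝ) (hc : 0 < c) (x : ℝ) (hx : 0 ≤ x) :
    Summable (fun n : ℕ => x ^ n / ((n.factorial : ℝ)) ^ c) := by
  rcases hx.eq_or_lt with h | h
  · apply summable_of_ne_finset_zero (s := {0})
    intro n hn
    simp only [Finset.mem_singleton] at hn
    rw [← h, zero_pow hn, zero_div]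
  · apply summable_of_ratio_test_tendsto_lt_one (l := 0) one_pos
    · filter_upwards with n
      have h1 : (0:ℝ) < x ^ n := pow_pos h n
      have h2 : (0:ℝ) < ((n.factorial : ℝ)) ^ c :=
        Real.rpow_pos_of_pos (Nat.cast_pos.mpr n.factorial_pos) c
      positivity
    · have htend : Filter.Tendsto (fun n : ℕ => x / (((n:ℝ) + 1) ^ c))
          Filter.atTop (nhds 0) := by
        apply Filter.Tendsto.div_atTop (tendsto_const_nhds)
        exact (tendsto_rpow_atTop hc).comp
          (Filter.tendsto_atTop_add_const_right _ 1 tendsto_natCast_atTop_atTop)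
      apply htend.congr
      intro n
      have hfact : (0:ℝ) < (n.factorial : ℝ) := Nat.cast_pos.mpr n.factorial_pos
      have h2 : (0:ℝ) < ((n.factorial : ℝ)) ^ c := Real.rpow_pos_of_pos hfact c
      have h3 : (0:ℝ) < (((n+1).factorial : ℝ)) ^ c :=
        Real.rpow_pos_of_pos (Nat.cast_pos.mpr (n+1).factorial_pos) c
      have hxn : (0:ℝ) < x ^ n := pow_pos h n
      have hfs : (((n+1).factorial : ℝ)) = ((n:ℝ) + 1) * (n.factorial : ℝ) := by
        push_cast [Nat.factorial_succ]
        ring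
      have hsplit : (((n+1).factorial : ℝ)) ^ c = ((n:ℝ) + 1) ^ c * ((n.factorial : ℝ)) ^ c := by
        rw [hfs, Real.mul_rpow (by positivity) hfact.le]
      have hn1 : (0:ℝ) < ((n:ℝ) + 1) ^ c := Real.rpow_pos_of_pos (by positivity) c
      rw [Real.norm_eq_abs, Real.norm_eq_abs, abs_of_pos (by positivity),
        abs_of_pos (by positivity), hsplit]
      field_simp
      ring

private lemma mytsum_pos (c : ℝ) (hc : 0 < c) (x : ℝ) (hx : 0 ≤ x) :
    0 < ∑' n : ℕ, x ^ n / ((n.factorial : ℝ)) ^ c := by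
  have h0 : x ^ 0 / (((Nat.factorial 0 : ℕ) : ℝ)) ^ c = 1 := by
    simp [Real.one_rpow]
  have hle := Summable.le_tsum (mysumm c hc x hx) 0 (fun j _ => myterm_nonneg c x hx j)
  rw [h0] at hle
  linarith

private lemma mykey (c : ℝ) (hc : 0 < c) (b : ℕ) (x₁ x₂ : ℝ) (h1 : 0 ≤ x₁) (h12 : x₁ ≤ x₂) :
    (∑ n ∈ Finset.range (b + 2), x₂ ^ n / ((n.factorial : ℝ)) ^ c) /
        (∑' n : ℕ, x₂ ^ n / ((n.factorial : ℝ)) ^ c) ≤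
      (∑ n ∈ Finset.range (b + 2), x₁ ^ n / ((n.factorial : ℝ)) ^ c) /
        (∑' n : ℕ, x₁ ^ n / ((n.factorial : ℝ)) ^ c) := by
  have h2 : 0 ≤ x₂ := h1.trans h12
  set f₁ : ℕ → ℝ := fun n => x₁ ^ n / ((n.factorial : ℝ)) ^ c with hf₁
  set f₂ : ℕ → ℝ := fun n => x₂ ^ n / ((n.factorial : ℝ)) ^ c with hf₂
  have hs₁ := mysumm c hc x₁ h1
  have hs₂ := mysumm c hc x₂ h2
  have hS₁ := mytsum_pos c hc x₁ h1
  have hS₂ := mytsum_pos c hc x₂ h2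
  rw [div_le_div_iff₀ hS₂ hS₁]
  -- decompose tsums
  have hd₁ := Summable.sum_add_tsum_nat_add (b + 2) hs₁
  have hd₂ := Summable.sum_add_tsum_nat_add (b + 2) hs₂
  rw [← hd₁, ← hd₂, mul_add, mul_add]
  have hPP : (∑ n ∈ Finset.range (b + 2), f₂ n) * (∑ n ∈ Finset.range (b + 2), f₁ n)
      = (∑ n ∈ Finset.range (b + 2), f₁ n) * (∑ n ∈ Finset.range (b + 2), f₂ n) := mul_comm _ _
  have hshift₁ : Summable (fun m : ℕ => f₁ (m + (b + 2))) :=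
    hs₁.comp_injective (add_left_injective (b + 2))
  have hshift₂ : Summable (fun m : ℕ => f₂ (m + (b + 2))) :=
    hs₂.comp_injective (add_left_injective (b + 2))
  have hT : (∑ n ∈ Finset.range (b + 2), f₂ n) * (∑' m : ℕ, f₁ (m + (b + 2)))
      ≤ (∑ n ∈ Finset.range (b + 2), f₁ n) * (∑' m : ℕ, f₂ (m + (b + 2))) := by
    rw [← tsum_mul_left, ← tsum_mul_left]
    apply Summable.tsum_le_tsum _ (hshift₁.mul_left _) (hshift₂.mul_left _)
    intro m
    set M := m + (b + 2) with hM
    have hDpos : (0:ℝ) < ((M.factorial : ℝ)) ^ c :=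
      Real.rpow_pos_of_pos (Nat.cast_pos.mpr M.factorial_pos) c
    show (∑ n ∈ Finset.range (b + 2), f₂ n) * (x₁ ^ M / ((M.factorial : ℝ)) ^ c)
        ≤ (∑ n ∈ Finset.range (b + 2), f₁ n) * (x₂ ^ M / ((M.factorial : ℝ)) ^ c)
    rw [← mul_div_assoc, ← mul_div_assoc, div_le_div_iff_of_pos_right hDpos,
      Finset.sum_mul, Finset.sum_mul]
    apply Finset.sum_le_sum
    intro n hn
    have hnM : n ≤ M := by
      have := Finset.mem_range.mp hn
      omega
    have hDn : (0:ℝ) < ((n.factorial : ℝ)) ^ c :=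
      Real.rpow_pos_of_pos (Nat.cast_pos.mpr n.factorial_pos) c
    show x₂ ^ n / ((n.factorial : ℝ)) ^ c * x₁ ^ M ≤ x₁ ^ n / ((n.factorial : ℝ)) ^ c * x₂ ^ M
    rw [div_mul_eq_mul_div, div_mul_eq_mul_div, div_le_div_iff_of_pos_right hDn]
    have e1 : x₁ ^ M = x₁ ^ n * x₁ ^ (M - n) := by
      rw [← pow_add, Nat.add_sub_cancel' hnM]
    have e2 : x₂ ^ M = x₂ ^ n * x₂ ^ (M - n) := by
      rw [← pow_add, Nat.add_sub_cancel' hnM]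
    rw [e1, e2]
    calc x₂ ^ n * (x₁ ^ n * x₁ ^ (M - n)) = (x₁ ^ n * x₂ ^ n) * x₁ ^ (M - n) := by ring
      _ ≤ (x₁ ^ n * x₂ ^ n) * x₂ ^ (M - n) := by
            apply mul_le_mul_of_nonneg_left (pow_le_pow_left₀ h1 h12 _)
            positivity
      _ = x₁ ^ n * (x₂ ^ n * x₂ ^ (M - n)) := by ring
  linarith

/-- With `G(λ) = (∑_{n=0}^{b+1} (λ/μ)^n/(n!)^c) / (∑_{n=0}^∞ (λ/μ)^n/(n!)^c)`,
the feasible set `{λ ≥ 0 : G λ ≥ 1 − θ}` is downward closed; and if its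
supremum `λ_max` is attained, the constraint `G λ ≥ 1 − θ` (for `λ ≥ 0`) is
equivalent to `λ ≤ λ_max`. -/
theorem feasible_set_downward_closed (mu c : ℝ) (hmu : 0 < mu) (hc : 0 < c)
    (b : ℕ) (θ : ℝ) (G : ℝ → ℝ)
    (hG : ∀ lam : ℝ, G lam =
      (∑ n ∈ Finset.range (b + 2), (lam / mu) ^ n / ((n.factorial : ℝ)) ^ c) /
        (∑' n : ℕ, (lam / mu) ^ n / ((n.factorial : ℝ)) ^ c)) :
    (∀ lam₁ lam₂ : ℝ, 0 ≤ lam₁ → lam₁ ≤ lam₂ → 1 - θ ≤ G lam₂ → 1 - θ ≤ G lam₁) ∧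
    (∀ lamMax : ℝ, lamMax ∈ {lam : ℝ | 0 ≤ lam ∧ 1 - θ ≤ G lam} →
      IsLUB {lam : ℝ | 0 ≤ lam ∧ 1 - θ ≤ G lam} lamMax →
      ∀ lam : ℝ, 0 ≤ lam → (1 - θ ≤ G lam ↔ lam ≤ lamMax)) := by
  have mono : ∀ lam₁ lam₂ : ℝ, 0 ≤ lam₁ → lam₁ ≤ lam₂ → 1 - θ ≤ G lam₂ → 1 - θ ≤ G lam₁ := by
    intro lam₁ lam₂ h0 h12 hθ
    have hdd : lam₁ / mu ≤ lam₂ / mu := by gcongr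
    have hkey := mykey c hc b (lam₁ / mu) (lam₂ / mu) (div_nonneg h0 hmu.le) hdd
    rw [hG lam₁, hG lam₂] at *
    linarith
  refine ⟨mono, ?_⟩
  intro lamMax hmem hlub lam hlam
  constructor
  · intro h
    exact hlub.1 ⟨hlam, h⟩
  · intro h
    exact mono lam lamMax hlam h hmem.2
end
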